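/- Let a ∈ S^{n-1} ⊂ ℝⁿ (n ≥ 2), λ > 0, and let ζ¹, ζ² : U → ℝ^m be smooth maps on U ⊂ ℝⁿ with ⟨ζⁱ, ζ^j⟩ = δ_{ij} pointwise and ∇vᵀ ζⁱ = 0 for a smooth map v : U → ℝ^m. Then the perturbed map w = v + (c/λ)(sin(λ x·a) ζ¹ + cos(λ x·a) ζ²), with c : U → ℝ smooth, satisfies ∇wᵀ∇w = ∇vᵀ∇v + c² a⊗a + E, where E consists only of terms carrying at least one factor λ^{-1} (explicitly E = 2(c/λ)sym(∇vᵀB) + 2(c²/λ)sym(AᵀB) + (c²/λ²)BᵀB + λ^{-1}- and λ^{-2}-order terms involving ∇c and ∇ζⁱ). -/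

import Mathlib

open Matrix

/-- Jacobian matrix of a map `f : ℝⁿ → ℝ^m`. -/
noncomputable def jacM (n m : ℕ) (f : (Fin n → ℝ) → Fin m → ℝ) (x : Fin n → ℝ) :
    Matrix (Fin m) (Fin n) ℝ :=
  Matrix.of fun k i => fderiv ℝ f x (Pi.single i 1) k

/-- Gradient of a scalar function on `ℝⁿ`. -/
noncomputable def gradV (n : ℕ) (c : (Fin n → ℝ) → ℝ) (x : Fin n → ℝ) : Fin n → ℝ :=
  fun i => fderiv ℝ c x (Pi.single i 1)

/-- Symmetric part `sym(M) = (M + Mᵀ)/2`. -/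
noncomputable def symPart (n : ℕ) (M : Matrix (Fin n) (Fin n) ℝ) : Matrix (Fin n) (Fin n) ℝ :=
  (2 : ℝ)⁻¹ • (M + Mᵀ)

lemma mul_vecMulVec' {l m n : ℕ} (M : Matrix (Fin l) (Fin m) ℝ) (u : Fin m → ℝ) (v : Fin n → ℝ) :
    M * vecMulVec u v = vecMulVec (M *ᵥ u) v := by
  ext i j
  simp [Matrix.mul_apply, vecMulVec_apply, Matrix.mulVec, dotProduct, Finset.sum_mul, mul_assoc]

lemma vecMulVec_transpose' {l m : ℕ} (u : Fin l → ℝ) (v : Fin m → ℝ) :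
    (vecMulVec u v)ᵀ = vecMulVec v u := by
  ext i j; simp [vecMulVec_apply, mul_comm]

lemma vecMulVec_zero_left {l m : ℕ} (v : Fin m → ℝ) :
    vecMulVec (0 : Fin l → ℝ) v = 0 := by
  ext i j; simp [vecMulVec_apply]

lemma vecMulVec_mul_vecMulVec {l m n : ℕ} (u : Fin l → ℝ) (v w : Fin m → ℝ) (z : Fin n → ℝ) :
    vecMulVec u v * vecMulVec w z = (v ⬝ᵥ w) • vecMulVec u z := by
  ext i j
  simp [Matrix.mul_apply, vecMulVec_apply, dotProduct, Finset.mul_sum, Finset.sum_mul]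
  exact Finset.sum_congr rfl fun k _ => by ring

set_option maxHeartbeats 2000000 in
/-- algebraic core of the Nash twist: for orthonormal normal fields
`ζ¹, ζ²` of `v` and `w = v + (c/λ)(sin(λ x·a) ζ¹ + cos(λ x·a) ζ²)`, one has
`∇wᵀ∇w = ∇vᵀ∇v + c² a⊗a + E` where each term of `E` carries at least one factor `λ⁻¹`:
`E = (2c/λ) sym(∇vᵀB) + (2c²/λ) sym(AᵀB) + (c²/λ²) BᵀB
   + (2c/λ²) sym(Bᵀ (C ⊗ ∇c)) + (1/λ²) ∇c ⊗ ∇c`. -/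
theorem stmt18 (n m : ℕ) (hn : 2 ≤ n) (a : Fin n → ℝ) (ha : ∑ i, a i ^ 2 = 1)
    (lam : ℝ) (hlam : 0 < lam)
    (v ζ1 ζ2 : (Fin n → ℝ) → Fin m → ℝ) (c : (Fin n → ℝ) → ℝ)
    (hv : ContDiff ℝ (⊤ : ℕ∞) v) (hζ1 : ContDiff ℝ (⊤ : ℕ∞) ζ1) (hζ2 : ContDiff ℝ (⊤ : ℕ∞) ζ2)
    (hc : ContDiff ℝ (⊤ : ℕ∞) c)
    (h11 : ∀ x, ∑ k, ζ1 x k * ζ1 x k = 1)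
    (h22 : ∀ x, ∑ k, ζ2 x k * ζ2 x k = 1)
    (h12 : ∀ x, ∑ k, ζ1 x k * ζ2 x k = 0)
    (hnormal1 : ∀ x, (jacM n m v x)ᵀ *ᵥ ζ1 x = 0)
    (hnormal2 : ∀ x, (jacM n m v x)ᵀ *ᵥ ζ2 x = 0) :
    ∀ x : Fin n → ℝ,
      let θ : (Fin n → ℝ) → ℝ := fun y => lam * ∑ i, y i * a i
      let w : (Fin n → ℝ) → Fin m → ℝ := fun y =>
        v y + (c y / lam) • (Real.sin (θ y) • ζ1 y + Real.cos (θ y) • ζ2 y)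
      let A : Matrix (Fin m) (Fin n) ℝ :=
        Matrix.of fun k i => Real.cos (θ x) * ζ1 x k * a i - Real.sin (θ x) * ζ2 x k * a i
      let B : Matrix (Fin m) (Fin n) ℝ :=
        Matrix.of fun k i =>
          Real.sin (θ x) * jacM n m ζ1 x k i + Real.cos (θ x) * jacM n m ζ2 x k i
      let Cv : Fin m → ℝ := fun k => Real.sin (θ x) * ζ1 x k + Real.cos (θ x) * ζ2 x k
      (jacM n m w x)ᵀ * jacM n m w x =
        (jacM n m v x)ᵀ * jacM n m v x + c x ^ 2 • vecMulVec a a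
          + (2 * c x / lam) • symPart n ((jacM n m v x)ᵀ * B)
          + (2 * c x ^ 2 / lam) • symPart n (Aᵀ * B)
          + (c x ^ 2 / lam ^ 2) • (Bᵀ * B)
          + (2 * c x / lam ^ 2) • symPart n (Bᵀ * vecMulVec Cv (gradV n c x))
          + (lam ^ 2)⁻¹ • vecMulVec (gradV n c x) (gradV n c x) := by
  intro x θ w A B Cv
  have hvx : HasFDerivAt v (fderiv ℝ v x) x := (hv.differentiable (by simp) x).hasFDerivAt
  have hz1x : HasFDerivAt ζ1 (fderiv ℝ ζ1 x) x := (hζ1.differentiable (by simp) x).hasFDerivAt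
  have hz2x : HasFDerivAt ζ2 (fderiv ℝ ζ2 x) x := (hζ2.differentiable (by simp) x).hasFDerivAt
  have hcx : HasFDerivAt c (fderiv ℝ c x) x := (hc.differentiable (by simp) x).hasFDerivAt
  set Tθ : (Fin n → ℝ) →L[ℝ] ℝ :=
    lam • ∑ j, a j • (ContinuousLinearMap.proj j : ((Fin n → ℝ) →L[ℝ] ℝ)) with hTθ
  have hθx : HasFDerivAt θ Tθ x := by
    have h0 : HasFDerivAt (fun y : Fin n → ℝ => ∑ j, y j * a j)
        (∑ j, a j • (ContinuousLinearMap.proj j : ((Fin n → ℝ) →L[ℝ] ℝ))) x :=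
      HasFDerivAt.fun_sum fun j _ => (hasFDerivAt_apply j x).mul_const (a j)
    exact h0.const_mul lam
  have hTeval : ∀ i, Tθ (Pi.single i 1) = lam * a i := by
    intro i
    simp [hTθ, ContinuousLinearMap.sum_apply, Pi.single_apply, Finset.sum_ite_eq, mul_ite]
  have hsin : HasFDerivAt (fun y => Real.sin (θ y)) (Real.cos (θ x) • Tθ) x :=
    (Real.hasDerivAt_sin (θ x)).comp_hasFDerivAt x hθx
  have hcos : HasFDerivAt (fun y => Real.cos (θ y)) ((-Real.sin (θ x)) • Tθ) x :=
    (Real.hasDerivAt_cos (θ x)).comp_hasFDerivAt x hθx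
  have hwD : ∀ k, HasFDerivAt (fun y => w y k)
      ((ContinuousLinearMap.proj k).comp (fderiv ℝ v x) +
        ((c x * lam⁻¹) •
            ((Real.sin (θ x) • ((ContinuousLinearMap.proj k).comp (fderiv ℝ ζ1 x)) +
                ζ1 x k • (Real.cos (θ x) • Tθ)) +
              (Real.cos (θ x) • ((ContinuousLinearMap.proj k).comp (fderiv ℝ ζ2 x)) +
                ζ2 x k • ((-Real.sin (θ x)) • Tθ))) +
          (Real.sin (θ x) * ζ1 x k + Real.cos (θ x) * ζ2 x k) • (lam⁻¹ • fderiv ℝ c x))) x := by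
    intro k
    have hfun : (fun y => w y k) = fun y =>
        v y k + (c y * lam⁻¹) * (Real.sin (θ y) * ζ1 y k + Real.cos (θ y) * ζ2 y k) := by
      funext y
      show w y k = _
      simp [w, div_eq_mul_inv, mul_add]
    rw [hfun]
    have e1 : HasFDerivAt (fun y => v y k)
        ((ContinuousLinearMap.proj k).comp (fderiv ℝ v x)) x :=
      ((ContinuousLinearMap.proj k : (Fin m → ℝ) →L[ℝ] ℝ)).hasFDerivAt.comp x hvx
    have ez1 : HasFDerivAt (fun y => ζ1 y k)
        ((ContinuousLinearMap.proj k).comp (fderiv ℝ ζ1 x)) x :=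
      ((ContinuousLinearMap.proj k : (Fin m → ℝ) →L[ℝ] ℝ)).hasFDerivAt.comp x hz1x
    have ez2 : HasFDerivAt (fun y => ζ2 y k)
        ((ContinuousLinearMap.proj k).comp (fderiv ℝ ζ2 x)) x :=
      ((ContinuousLinearMap.proj k : (Fin m → ℝ) →L[ℝ] ℝ)).hasFDerivAt.comp x hz2x
    exact e1.add ((hcx.mul_const lam⁻¹).mul ((hsin.mul ez1).add (hcos.mul ez2)))
  have key : jacM n m w x =
      jacM n m v x + c x • A + (c x / lam) • B + lam⁻¹ • vecMulVec Cv (gradV n c x) := by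
    ext k i
    show fderiv ℝ w x (Pi.single i 1) k = _
    rw [show fderiv ℝ w x = fderiv ℝ (fun y k => w y k) x from rfl,
      fderiv_pi fun k => (hwD k).differentiableAt]
    rw [ContinuousLinearMap.pi_apply, (hwD k).fderiv]
    simp only [ContinuousLinearMap.add_apply, ContinuousLinearMap.smul_apply,
      ContinuousLinearMap.comp_apply, ContinuousLinearMap.proj_apply, hTeval i, smul_eq_mul]
    simp only [Matrix.add_apply, Matrix.smul_apply, Matrix.of_apply, A, B, Cv,
      vecMulVec_apply, jacM, gradV, smul_eq_mul]
    have hl : lam ≠ 0 := ne_of_gt hlam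
    field_simp
    ring
  -- vector-level facts
  have hA : A = vecMulVec (Real.cos (θ x) • ζ1 x - Real.sin (θ x) • ζ2 x) a := by
    ext k i
    simp [A, vecMulVec_apply]
    ring
  have hCv : Cv = Real.sin (θ x) • ζ1 x + Real.cos (θ x) • ζ2 x := by
    funext k; simp [Cv]
  have d11 : ζ1 x ⬝ᵥ ζ1 x = 1 := h11 x
  have d22 : ζ2 x ⬝ᵥ ζ2 x = 1 := h22 x
  have d12 : ζ1 x ⬝ᵥ ζ2 x = 0 := h12 x
  have d21 : ζ2 x ⬝ᵥ ζ1 x = 0 := by rw [dotProduct_comm]; exact d12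
  have hpyt := Real.sin_sq_add_cos_sq (θ x)
  have huu : (Real.cos (θ x) • ζ1 x - Real.sin (θ x) • ζ2 x) ⬝ᵥ
      (Real.cos (θ x) • ζ1 x - Real.sin (θ x) • ζ2 x) = 1 := by
    simp [dotProduct_sub, sub_dotProduct, dotProduct_smul, smul_dotProduct,
      d11, d22, d12, d21, smul_eq_mul]
    nlinarith [hpyt]
  have hCC : (Real.sin (θ x) • ζ1 x + Real.cos (θ x) • ζ2 x) ⬝ᵥ
      (Real.sin (θ x) • ζ1 x + Real.cos (θ x) • ζ2 x) = 1 := by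
    simp [dotProduct_add, add_dotProduct, dotProduct_smul, smul_dotProduct,
      d11, d22, d12, d21, smul_eq_mul]
    nlinarith [hpyt]
  have huC : (Real.cos (θ x) • ζ1 x - Real.sin (θ x) • ζ2 x) ⬝ᵥ
      (Real.sin (θ x) • ζ1 x + Real.cos (θ x) • ζ2 x) = 0 := by
    simp [dotProduct_add, add_dotProduct, dotProduct_sub, sub_dotProduct,
      dotProduct_smul, smul_dotProduct, d11, d22, d12, d21, smul_eq_mul]
    ring
  have hCu : (Real.sin (θ x) • ζ1 x + Real.cos (θ x) • ζ2 x) ⬝ᵥ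
      (Real.cos (θ x) • ζ1 x - Real.sin (θ x) • ζ2 x) = 0 := by
    rw [dotProduct_comm]; exact huC
  have hPu : (jacM n m v x)ᵀ *ᵥ (Real.cos (θ x) • ζ1 x - Real.sin (θ x) • ζ2 x) = 0 := by
    simp [Matrix.mulVec_sub, Matrix.mulVec_smul, hnormal1 x, hnormal2 x]
  have hPC : (jacM n m v x)ᵀ *ᵥ (Real.sin (θ x) • ζ1 x + Real.cos (θ x) • ζ2 x) = 0 := by
    simp [Matrix.mulVec_add, Matrix.mulVec_smul, hnormal1 x, hnormal2 x]
  -- matrix-level facts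
  have fPA : (jacM n m v x)ᵀ * A = 0 := by
    rw [hA, mul_vecMulVec', hPu, vecMulVec_zero_left]
  have fAP : Aᵀ * jacM n m v x = 0 := by
    have := congrArg Matrix.transpose fPA
    simpa [Matrix.transpose_mul] using this
  have fAA : Aᵀ * A = vecMulVec a a := by
    rw [hA, vecMulVec_transpose', _root_.vecMulVec_mul_vecMulVec, huu, one_smul]
  have fPM : (jacM n m v x)ᵀ * vecMulVec Cv (gradV n c x) = 0 := by
    rw [hCv, mul_vecMulVec', hPC, vecMulVec_zero_left]
  have fMP : (vecMulVec Cv (gradV n c x))ᵀ * jacM n m v x = 0 := by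
    have := congrArg Matrix.transpose fPM
    simpa [Matrix.transpose_mul] using this
  have fAM : Aᵀ * vecMulVec Cv (gradV n c x) = 0 := by
    rw [hA, hCv, vecMulVec_transpose', _root_.vecMulVec_mul_vecMulVec, huC, zero_smul]
  have fMA : (vecMulVec Cv (gradV n c x))ᵀ * A = 0 := by
    have := congrArg Matrix.transpose fAM
    simpa [Matrix.transpose_mul] using this
  have fMM : (vecMulVec Cv (gradV n c x))ᵀ * vecMulVec Cv (gradV n c x) =
      vecMulVec (gradV n c x) (gradV n c x) := by
    rw [hCv, vecMulVec_transpose', _root_.vecMulVec_mul_vecMulVec, hCC, one_smul]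
  rw [key]
  simp only [Matrix.transpose_add, Matrix.transpose_smul, Matrix.add_mul, Matrix.mul_add,
    Matrix.smul_mul, Matrix.mul_smul, fPA, fAP, fAA, fPM, fMP, fAM, fMA, fMM,
    smul_zero, add_zero, zero_add, symPart, Matrix.transpose_mul, Matrix.transpose_transpose]
  match_scalars <;> ring
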